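/- arXiv:cs/0111054 — 3 statements merged into one kernel-verified Lean document; each statement's English description precedes it below -/
import Mathlib

section
/- For all x, y, z ∈ X, the normalized information distance satisfies the triangle inequality d(x,y) ≤ d(x,z) + d(z,y). -/
private lemma nid_key {X : Type*} (K : X → ℝ) (F : X → X → ℝ)
    (hK : ∀ x, 0 < K x)
    (hF0 : ∀ x y, 0 ≤ F x y)
    (hFK : ∀ x y, F x y ≤ K x)
    (hsym : ∀ x y, K x + F y x = K y + F x y)
    (htri : ∀ x y z, F x y ≤ F x z + F z y)
    (d : X → X → ℝ)
    (hd : ∀ x y, d x y = max (F x y) (F y x) / max (K x) (K y))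
    (x y z : X) (hxy : K x ≤ K y) : d x y ≤ d x z + d z y := by
  have hFyx : F x y ≤ F y x := by have := hsym x y; linarith
  have hdxy : d x y = F y x / K y := by
    rw [hd, max_eq_right hxy, max_eq_right hFyx]
  rcases le_total (K z) (K y) with hz | hz
  · -- K z ≤ K y
    have h1 : F z x / K y ≤ d x z := by
      rw [hd]
      exact div_le_div₀ ((hF0 x z).trans (le_max_left _ _)) (le_max_right _ _) ((hK x).trans_le (le_max_left _ _)) (max_le hxy hz)
    have h2 : F y z / K y ≤ d z y := by
      rw [hd, max_eq_right hz]
      exact div_le_div_of_nonneg_right (le_max_right _ _) (hK y).le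
    have h3 : F y x / K y ≤ F y z / K y + F z x / K y := by
      rw [← add_div]
      exact div_le_div_of_nonneg_right (htri y x z) (hK y).le
    rw [hdxy]
    linarith
  · -- K y ≤ K z
    have hxz : K x ≤ K z := hxy.trans hz
    have hdxz : d x z = F z x / K z := by
      have : F x z ≤ F z x := by have := hsym x z; linarith
      rw [hd, max_eq_right hxz, max_eq_right this]
    have hdzy : d z y = F z y / K z := by
      have h : F y z ≤ F z y := by have := hsym z y; linarith
      rw [hd, max_eq_left hz, max_eq_left h]
    rw [hdxy, hdxz, hdzy]
    rw [← add_div, div_le_div_iff₀ (hK y) (hK z)]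
    have hzy : F z y = F y z + (K z - K y) := by have := hsym z y; linarith
    have htr := htri y x z
    have hfk := hFK y x
    nlinarith [hF0 y x, hF0 z x, hF0 y z, hK y, hK z]

/-- The arithmetic core of the Claim inside Lemma 5.3 of "The Similarity Metric":
the normalized information distance satisfies the triangle inequality. -/
theorem nid_triangle {X : Type*} (K : X → ℝ) (F : X → X → ℝ)
    (hK : ∀ x, 0 < K x)
    (hF0 : ∀ x y, 0 ≤ F x y)
    (hFK : ∀ x y, F x y ≤ K x)
    (hsym : ∀ x y, K x + F y x = K y + F x y)
    (htri : ∀ x y z, F x y ≤ F x z + F z y)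
    (d : X → X → ℝ)
    (hd : ∀ x y, d x y = max (F x y) (F y x) / max (K x) (K y)) :
    ∀ x y z, d x y ≤ d x z + d z y := by
  have dsymm : ∀ a b, d a b = d b a := by
    intro a b; rw [hd, hd, max_comm (F a b), max_comm (K a)]
  intro x y z
  rcases le_total (K x) (K y) with h | h
  · exact nid_key K F hK hF0 hFK hsym htri d hd x y z h
  · rw [dsymm x y, dsymm x z, dsymm z y]
    have := nid_key K F hK hF0 hFK hsym htri d hd y x z h
    linarith
end

section
/- Assume additionally that F(x,x) = 0 for all x ∈ X. Then the normalized information distance d satisfies all the metric axioms except identity of indiscernibles, and is normalized: for all x, y, z ∈ X one has d(x,x) = 0, d(x,y) = d(y,x), 0 ≤ d(x,y) ≤ 1, and d(x,y) ≤ d(x,z) + d(z,y). -/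
/-- The arithmetic core of Lemma 5.3 and Theorem 5.5 of "The Similarity Metric":
the normalized information distance is a normalized distance satisfying all the
metric axioms except identity of indiscernibles. -/
theorem nid_normalized_semimetric {X : Type*} (K : X → ℝ) (F : X → X → ℝ)
    (hK : ∀ x, 0 < K x)
    (hF0 : ∀ x y, 0 ≤ F x y)
    (hFK : ∀ x y, F x y ≤ K x)
    (hsym : ∀ x y, K x + F y x = K y + F x y)
    (htri : ∀ x y z, F x y ≤ F x z + F z y)
    (hrefl : ∀ x, F x x = 0)
    (d : X → X → ℝ)
    (hd : ∀ x y, d x y = max (F x y) (F y x) / max (K x) (K y)) :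
    ∀ x y z, d x x = 0 ∧ d x y = d y x ∧ 0 ≤ d x y ∧ d x y ≤ 1 ∧
      d x y ≤ d x z + d z y := by
  have hKmax : ∀ x y : X, 0 < max (K x) (K y) := fun x y =>
    lt_max_of_lt_left (hK x)
  have dsym : ∀ x y, d x y = d y x := by
    intro x y
    rw [hd, hd, max_comm (F x y), max_comm (K x)]
  have dnn : ∀ x y, 0 ≤ d x y := by
    intro x y
    rw [hd]
    exact div_nonneg (le_max_of_le_left (hF0 x y)) (hKmax x y).le
  have dle1 : ∀ x y, d x y ≤ 1 := by
    intro x y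
    rw [hd, div_le_one (hKmax x y)]
    exact max_le (le_max_of_le_left (hFK x y)) (le_max_of_le_right (hFK y x))
  have d0 : ∀ x, d x x = 0 := by
    intro x
    rw [hd, hrefl, max_self, zero_div]
  -- triangle inequality under the assumption K y ≤ K x
  have key : ∀ x y z, K y ≤ K x → d x y ≤ d x z + d z y := by
    intro x y z hyx
    have hFyx : F y x ≤ F x y := by linarith [hsym x y]
    have hdxy : d x y = F x y / K x := by
      rw [hd, max_eq_left hFyx, max_eq_left hyx]
    rcases le_total (K z) (K x) with hzx | hxz
    · -- K z ≤ K x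
      have h1 : F x z / K x ≤ d x z := by
        rw [hd, max_eq_left hzx]
        exact div_le_div_of_nonneg_right (le_max_left _ _) (hK x).le |>.trans le_rfl
      have h2 : F z y / K x ≤ d z y := by
        rw [hd]
        have hm : max (K z) (K y) ≤ K x := max_le hzx hyx
        calc F z y / K x ≤ F z y / max (K z) (K y) :=
              div_le_div_of_nonneg_left (hF0 z y) (hKmax z y) hm
          _ ≤ max (F z y) (F y z) / max (K z) (K y) :=
              div_le_div_of_nonneg_right (le_max_left _ _) (hKmax z y).le |>.trans le_rfl
      calc d x y = F x y / K x := hdxy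
        _ ≤ (F x z + F z y) / K x := by
            apply div_le_div_of_nonneg_right (htri x y z) (hK x).le |>.trans le_rfl
        _ = F x z / K x + F z y / K x := add_div _ _ _
        _ ≤ d x z + d z y := add_le_add h1 h2
    · -- K x ≤ K z
      have hFzx : F x z ≤ F z x := by linarith [hsym z x]
      have hFsym : F z x = F x z + (K z - K x) := by linarith [hsym z x]
      have hdxz : d x z = F z x / K z := by
        rw [hd, max_eq_right hFzx, max_eq_right hxz]
      have hdzy : F z y / K z ≤ d z y := by
        rw [hd, max_eq_left (hyx.trans hxz)]
        exact div_le_div_of_nonneg_right (le_max_left _ _) (hK z).le |>.trans le_rfl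
      have hRHS : (F z x + F z y) / K z ≤ d x z + d z y := by
        rw [add_div, hdxz]
        exact add_le_add le_rfl hdzy
      rcases le_total (K z) (F z x + F z y) with hN | hN
      · -- RHS ≥ 1
        have : (1 : ℝ) ≤ (F z x + F z y) / K z := (one_le_div (hK z)).mpr hN
        linarith [dle1 x y, hRHS]
      · -- numerator small
        have hstep : F x y / K x ≤ (F z x + F z y) / K z := by
          rw [div_le_div_iff₀ (hK x) (hK z)]
          have h1 : F x y ≤ F x z + F z y := htri x y z
          nlinarith [hK x, hK z, hF0 x y]
        calc d x y = F x y / K x := hdxy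
          _ ≤ (F z x + F z y) / K z := hstep
          _ ≤ d x z + d z y := hRHS
  intro x y z
  refine ⟨d0 x, dsym x y, dnn x y, dle1 x y, ?_⟩
  rcases le_total (K y) (K x) with h | h
  · exact key x y z h
  · rw [dsym x y, dsym x z, dsym z y]
    calc d y x ≤ d y z + d z x := key y x z h
      _ = d z x + d y z := add_comm _ _
end

section
/- For every natural number n ≥ 2 and every x ∈ {0,1}^n, the Kraft inequality holds for the Hamming prefix-code lengths: the sum over all y ∈ {0,1}^n of 2^(−H_n(x,y)) is at most 1. -/
/-- Equation (4) in Example 3.4 of "The Similarity Metric": the Kraft inequality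
for the Hamming prefix-code lengths. -/
theorem hamming_code_kraft (n : ℕ) (hn : 2 ≤ n) (x : Fin n → Bool) :
    ∑ y : Fin n → Bool,
      (2 : ℝ) ^ (-(2 * Real.logb 2 n + 4 * Real.logb 2 (Real.logb 2 n) + 2 +
        (hammingDist x y : ℝ) * Real.logb 2 n)) ≤ 1 := by
  have hn0 : (0:ℝ) < n := by positivity
  have hn2 : (2:ℝ) ≤ n := by exact_mod_cast hn
  set L := Real.logb 2 n with hLdef
  have hL1 : 1 ≤ L := by
    rw [hLdef, show (1:ℝ) = Real.logb 2 2 by simp]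
    exact Real.logb_le_logb_of_le (by norm_num) (by norm_num) hn2
  have hLL : 0 ≤ Real.logb 2 L := Real.logb_nonneg (by norm_num) hL1
  have h2L : (2:ℝ) ^ L = n := Real.rpow_logb (by norm_num) (by norm_num) hn0
  -- pointwise bound
  have hpt : ∀ y : Fin n → Bool,
      (2 : ℝ) ^ (-(2 * L + 4 * Real.logb 2 L + 2 + (hammingDist x y : ℝ) * L)) ≤
        (1 / ((n:ℝ)^2 * 4)) * (1/(n:ℝ)) ^ (hammingDist x y) := by
    intro y
    set d : ℕ := hammingDist x y
    have step1 : (2 : ℝ) ^ (-(2 * L + 4 * Real.logb 2 L + 2 + (d : ℝ) * L)) ≤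
        (2 : ℝ) ^ (-(2 * L + 2 + (d : ℝ) * L)) := by
      apply Real.rpow_le_rpow_of_exponent_le (by norm_num)
      linarith
    have step2 : (2 : ℝ) ^ (-(2 * L + 2 + (d : ℝ) * L)) =
        (1 / ((n:ℝ)^2 * 4)) * (1/(n:ℝ)) ^ d := by
      have h24 : (2:ℝ) ^ ((-2):ℝ) = 1/4 := by
        rw [show ((-2):ℝ) = (((-2):ℤ):ℝ) by norm_num, Real.rpow_intCast]; norm_num
      rw [show -(2 * L + 2 + (d : ℝ) * L) = (L * (-2)) + (-2) + (L * (-(d:ℝ))) by ring,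
        Real.rpow_add (by norm_num), Real.rpow_add (by norm_num),
        Real.rpow_mul (by norm_num), Real.rpow_mul (by norm_num), h2L, h24,
        Real.rpow_neg hn0.le, Real.rpow_neg hn0.le, Real.rpow_natCast, Real.rpow_two]
      field_simp
      rw [← mul_pow, mul_one_div_cancel hn0.ne', one_pow]
    exact step1.trans_eq step2
  have hsum : ∑ y : Fin n → Bool, (1/(n:ℝ)) ^ (hammingDist x y) = (1 + 1/(n:ℝ)) ^ n := by
    have hterm : ∀ y : Fin n → Bool,
        (1/(n:ℝ)) ^ (hammingDist x y) = ∏ i, (if x i = y i then (1:ℝ) else 1/(n:ℝ)) := by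
      intro y
      rw [Finset.prod_ite, Finset.prod_const, Finset.prod_const, one_pow, one_mul]
      congr 1
    rw [Finset.sum_congr rfl fun y _ => hterm y, ← Fintype.prod_sum (f := fun (i : Fin n) (b : Bool) => if x i = b then (1:ℝ) else 1/(n:ℝ))]
    rw [show (1 + 1/(n:ℝ)) ^ n = ∏ _i : Fin n, (1 + 1/(n:ℝ)) by
      rw [Finset.prod_const, Finset.card_univ, Fintype.card_fin]]
    apply Finset.prod_congr rfl
    intro i _
    cases hx : x i <;> simp [hx, add_comm]
  have hbinom : (1 + 1/(n:ℝ)) ^ n ≤ 3 := by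
    have h1 : (1 + 1/(n:ℝ)) ≤ Real.exp (1/(n:ℝ)) := by
      have := Real.add_one_le_exp (1/(n:ℝ)); linarith
    have h2 : (1 + 1/(n:ℝ)) ^ n ≤ (Real.exp (1/(n:ℝ))) ^ n :=
      pow_le_pow_left₀ (by positivity) h1 n
    have h3 : (Real.exp (1/(n:ℝ))) ^ n = Real.exp 1 := by
      rw [← Real.exp_nat_mul, mul_one_div, div_self hn0.ne']
    have h4 : Real.exp 1 ≤ 3 := by
      have := Real.exp_one_lt_d9; linarith
    calc (1 + 1/(n:ℝ)) ^ n ≤ (Real.exp (1/(n:ℝ))) ^ n := h2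
      _ = Real.exp 1 := h3
      _ ≤ 3 := h4
  calc ∑ y : Fin n → Bool,
      (2 : ℝ) ^ (-(2 * L + 4 * Real.logb 2 L + 2 + (hammingDist x y : ℝ) * L))
      ≤ ∑ y : Fin n → Bool, (1 / ((n:ℝ)^2 * 4)) * (1/(n:ℝ)) ^ (hammingDist x y) :=
        Finset.sum_le_sum fun y _ => hpt y
    _ = (1 / ((n:ℝ)^2 * 4)) * ((1 + 1/(n:ℝ)) ^ n) := by
        rw [← Finset.mul_sum, hsum]
    _ ≤ (1 / ((n:ℝ)^2 * 4)) * 3 := by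
        apply mul_le_mul_of_nonneg_left hbinom (by positivity)
    _ ≤ 1 := by
        rw [div_mul_eq_mul_div, one_mul, div_le_one (by positivity)]
        nlinarith
end
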